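/- Let n ≥ 1 be an integer, d > 0, and b, σ reals with σ ≠ 0 and T ≥ (n+1)d. Let (a_k) be the sequence a_0 = 1, a_{k+1} = a_k − (d/a_k)(b/σ)², and assume a_1, …, a_{n+1} are all positive. Let Q : [T−nd, T−(n−1)d] → ℝ be continuous with a_n ≤ Q(x) ≤ 1 for every x. Then the n-th slice integral system with coefficient Q admits a unique continuous solution (P₁₁, P₁₂, P₂₂) on [T−(n+1)d, T−nd] × [−d, 0]², and this solution satisfies a_{n+1} ≤ P₁₁(t) ≤ 1 for every t ∈ [T−(n+1)d, T−nd]. -/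

import Mathlib

/-!
With `t₁ = T - n d` and `k(y) = b² / (σ² Q(y + d))`, the function
`P₁₁(t) = Q(t₁) / (1 + Q(t₁) ∫_t^{t₁} k)` solves the Riccati equation `P₁₁' = k P₁₁²`, and the
triple `(P₁₁, b P₁₁, b² P₁₁)` satisfies all three integral equations. Since `a_n ≤ Q ≤ 1`, the
integral of `k` over the slice is at most `d (b/σ)² / a_n`, which gives
`P₁₁ ≥ a_n - (d / a_n) (b/σ)² = a_{n+1}`.

Uniqueness is a Gronwall argument. Every equation expresses a value at time `t` through an
integral over `[t, t₁]` and values at later times, so the largest discrepancy `E(t)` between two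
continuous solutions on `[t, t₁] × [-d, 0]²` satisfies `E(t) ≤ L ∫_t^{t₁} E`. Iterating gives
`E(t) ≤ M (L (t₁ - t))^j / j!` for every `j`, hence `E = 0`.
-/

open Set MeasureTheory

/-- The `n`-th slice integral system, posed on `[T-(n+1)d, T-nd] × [-d,0]²`, with
exogenous continuous coefficient `Q` (the restriction of `P₁₁` to the previous slice). -/
def isSliceSolution (n : ℕ) (b σ d T : ℝ) (Q : ℝ → ℝ)
    (P11 : ℝ → ℝ) (P12 : ℝ → ℝ → ℝ) (P22 : ℝ → ℝ → ℝ → ℝ) : Prop :=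
  ∀ t ∈ Icc (T - ((n : ℝ) + 1) * d) (T - (n : ℝ) * d), ∀ s ∈ Icc (-d) 0, ∀ r ∈ Icc (-d) 0,
    P11 t = Q (T - (n : ℝ) * d) -
      ∫ x in t..(T - (n : ℝ) * d), (P12 x 0) ^ 2 / (σ ^ 2 * Q (x + d)) ∧
    P12 t s = b * P11 (min (T - (n : ℝ) * d) (t + s + d)) -
      ∫ x in t..(min (T - (n : ℝ) * d) (t + s + d)),
        P12 x 0 * P22 x (t + s - x) 0 / (σ ^ 2 * Q (x + d)) ∧
    P22 t s r = b * P12 (min (T - (n : ℝ) * d) (t + min s r + d)) (|s - r| - d) -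
      ∫ x in t..(min (T - (n : ℝ) * d) (t + min s r + d)),
        P22 x (t + s - x) 0 * P22 x 0 (t + r - x) / (σ ^ 2 * Q (x + d))

def isContTripleSlice (n : ℕ) (d T : ℝ)
    (P11 : ℝ → ℝ) (P12 : ℝ → ℝ → ℝ) (P22 : ℝ → ℝ → ℝ → ℝ) : Prop :=
  ContinuousOn P11 (Icc (T - ((n : ℝ) + 1) * d) (T - (n : ℝ) * d)) ∧
  ContinuousOn (fun p : ℝ × ℝ => P12 p.1 p.2)
    (Icc (T - ((n : ℝ) + 1) * d) (T - (n : ℝ) * d) ×ˢ Icc (-d) 0) ∧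
  ContinuousOn (fun p : ℝ × ℝ × ℝ => P22 p.1 p.2.1 p.2.2)
    (Icc (T - ((n : ℝ) + 1) * d) (T - (n : ℝ) * d) ×ˢ Icc (-d) 0 ×ˢ Icc (-d) 0)

noncomputable def riccatiSol (k : ℝ → ℝ) (c t₁ t : ℝ) : ℝ :=
  c / (1 + c * ∫ x in t..t₁, k x)

section Riccati

variable {k : ℝ → ℝ} {c t₁ : ℝ}

@[simp]
lemma riccatiSol_self : riccatiSol k c t₁ t₁ = c := by
  simp [riccatiSol]

lemma one_le_one_add_mul_integral (hk : ∀ x, 0 ≤ k x) (hc : 0 ≤ c) {t : ℝ} (ht : t ≤ t₁) :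
    1 ≤ 1 + c * ∫ x in t..t₁, k x :=
  le_add_of_nonneg_right <| mul_nonneg hc <| intervalIntegral.integral_nonneg ht fun x _ => hk x

lemma hasDerivAt_riccatiSol (hk : Continuous k) (hk0 : ∀ x, 0 ≤ k x) (hc : 0 ≤ c) {t : ℝ}
    (ht : t ≤ t₁) :
    HasDerivAt (riccatiSol k c t₁) (riccatiSol k c t₁ t ^ 2 * k t) t := by
  have hK : HasDerivAt (fun u => ∫ x in u..t₁, k x) (-k t) t :=
    intervalIntegral.integral_hasDerivAt_left (hk.intervalIntegrable _ _)
      (hk.stronglyMeasurableAtFilter _ _) hk.continuousAt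
  have hden := (one_le_one_add_mul_integral hk0 hc ht).trans_lt' one_pos
  refine ((hasDerivAt_const t c).fun_div ((hK.const_mul c).const_add 1) hden.ne').congr_deriv ?_
  unfold riccatiSol
  field_simp
  ring

lemma integral_riccatiSol_sq_mul (hk : Continuous k) (hk0 : ∀ x, 0 ≤ k x) (hc : 0 ≤ c)
    {t m : ℝ} (ht : t ≤ t₁) (hm : m ≤ t₁) :
    ∫ x in t..m, riccatiSol k c t₁ x ^ 2 * k x = riccatiSol k c t₁ m - riccatiSol k c t₁ t := by
  have hderiv : ∀ x ∈ uIcc t m, HasDerivAt (riccatiSol k c t₁) (riccatiSol k c t₁ x ^ 2 * k x) x :=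
    fun x hx => hasDerivAt_riccatiSol hk hk0 hc (le_trans hx.2 (max_le ht hm))
  refine intervalIntegral.integral_eq_sub_of_hasDerivAt hderiv (ContinuousOn.intervalIntegrable ?_)
  exact fun x hx => (((hderiv x hx).continuousAt.pow 2).mul hk.continuousAt).continuousWithinAt

lemma riccatiSol_le (hk0 : ∀ x, 0 ≤ k x) (hc : 0 ≤ c) {t : ℝ} (ht : t ≤ t₁) :
    riccatiSol k c t₁ t ≤ c :=
  div_le_self hc (one_le_one_add_mul_integral hk0 hc ht)

lemma div_one_add_le_riccatiSol (hk0 : ∀ x, 0 ≤ k x) (hc : 0 ≤ c) {t K : ℝ} (ht : t ≤ t₁)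
    (hK : ∫ x in t..t₁, k x ≤ K) :
    c / (1 + c * K) ≤ riccatiSol k c t₁ t := by
  have := one_le_one_add_mul_integral hk0 hc ht
  unfold riccatiSol
  gcongr

lemma continuousOn_riccatiSol (hk : Continuous k) (hk0 : ∀ x, 0 ≤ k x)
    (hc : 0 ≤ c) : ContinuousOn (riccatiSol k c t₁) (Iic t₁) :=
  fun _ ht => (hasDerivAt_riccatiSol hk hk0 hc ht).continuousAt.continuousWithinAt

end Riccati

lemma sub_div_le_div_one_add_mul_div {a c β : ℝ} (ha : 0 < a) (hac : a ≤ c) (hc : c ≤ 1)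
    (hβ : 0 ≤ β) : a - β / a ≤ c / (1 + c * (β / a)) := by
  have hca : c * a ≤ 1 := by nlinarith
  -- cleared of denominators, the claim is `a² (a - c) + a β (c a - 1) - c β² ≤ 0`
  have : 0 < 1 + c * (β / a) := by have := ha.trans_le hac; positivity
  rw [le_div_iff₀ this]
  field_simp
  nlinarith [mul_nonneg (mul_nonneg ha.le ha.le) (sub_nonneg.2 hac),
    mul_nonneg (mul_nonneg ha.le hβ) (sub_nonneg.2 hca),
    mul_nonneg (ha.le.trans hac) (mul_nonneg hβ hβ)]

/-- The argument of `Q` is clamped to `[t₁, t₁ + d]` so that the kernel is continuous on `ℝ`. -/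
noncomputable def sliceKernel (b σ d t₁ : ℝ) (Q : ℝ → ℝ) (y : ℝ) : ℝ :=
  b ^ 2 / (σ ^ 2 * Q (max t₁ (min (t₁ + d) (y + d))))

noncomputable def sliceRiccati (b σ d t₁ : ℝ) (Q : ℝ → ℝ) : ℝ → ℝ :=
  riccatiSol (sliceKernel b σ d t₁ Q) (Q t₁) t₁

section SliceKernel

variable {b σ d t₁ q : ℝ} {Q : ℝ → ℝ}

lemma sliceKernel_of_le {y : ℝ} (hy₀ : t₁ ≤ y + d) (hy₁ : y ≤ t₁) :
    sliceKernel b σ d t₁ Q y = b ^ 2 / (σ ^ 2 * Q (y + d)) := by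
  rw [sliceKernel, min_eq_right (by linarith), max_eq_right hy₀]

lemma clamp_mem_Icc (hd : 0 ≤ d) (y : ℝ) : max t₁ (min (t₁ + d) y) ∈ Icc t₁ (t₁ + d) :=
  ⟨le_max_left _ _, max_le (by linarith) (min_le_left _ _)⟩

lemma continuous_sliceKernel (hd : 0 ≤ d) (hσ : σ ≠ 0) (hQ : ContinuousOn Q (Icc t₁ (t₁ + d)))
    (hQ0 : ∀ x ∈ Icc t₁ (t₁ + d), 0 < Q x) : Continuous (sliceKernel b σ d t₁ Q) :=
  continuous_const.div (continuous_const.mul (hQ.comp_continuous (by fun_prop)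
    fun y => clamp_mem_Icc hd (y + d))) fun y => by
      have := hQ0 _ (clamp_mem_Icc hd (y + d)); positivity

lemma sliceKernel_nonneg (hd : 0 ≤ d) (hQ0 : ∀ x ∈ Icc t₁ (t₁ + d), 0 < Q x) (y : ℝ) :
    0 ≤ sliceKernel b σ d t₁ Q y := by
  have := hQ0 _ (clamp_mem_Icc hd (y + d)); unfold sliceKernel; positivity

lemma sliceKernel_le (hd : 0 ≤ d) (hq : 0 < q) (hQq : ∀ x ∈ Icc t₁ (t₁ + d), q ≤ Q x) (y : ℝ) :
    sliceKernel b σ d t₁ Q y ≤ (b / σ) ^ 2 / q := by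
  have := hQq _ (clamp_mem_Icc hd (y + d))
  rw [sliceKernel, div_pow, div_div]
  rcases eq_or_ne σ 0 with rfl | hσ
  · simp
  gcongr

end SliceKernel

@[simp]
lemma sliceRiccati_self {b σ d t₁ : ℝ} {Q : ℝ → ℝ} : sliceRiccati b σ d t₁ Q t₁ = Q t₁ :=
  riccatiSol_self

lemma integral_sliceRiccati {b σ d t₁ : ℝ} {Q : ℝ → ℝ} (hd : 0 ≤ d) (hσ : σ ≠ 0)
    (hQ : ContinuousOn Q (Icc t₁ (t₁ + d))) (hQ0 : ∀ x ∈ Icc t₁ (t₁ + d), 0 < Q x) {t m : ℝ}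
    (ht : t₁ ≤ t + d) (htm : t ≤ m) (hm : m ≤ t₁) :
    ∫ y in t..m, b ^ 2 * sliceRiccati b σ d t₁ Q y ^ 2 / (σ ^ 2 * Q (y + d)) =
      sliceRiccati b σ d t₁ Q m - sliceRiccati b σ d t₁ Q t := by
  rw [sliceRiccati, ← integral_riccatiSol_sq_mul (continuous_sliceKernel hd hσ hQ hQ0)
    (sliceKernel_nonneg hd hQ0) (hQ0 _ ⟨le_rfl, by linarith⟩).le (htm.trans hm) hm]
  refine intervalIntegral.integral_congr fun y hy => ?_
  rw [uIcc_of_le htm] at hy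
  simp only [sliceKernel_of_le (by linarith [hy.1] : t₁ ≤ y + d) (hy.2.trans hm)]
  ring

lemma isSliceSolution_sliceRiccati {n : ℕ} {b σ d T : ℝ} {Q : ℝ → ℝ} (hd : 0 ≤ d) (hσ : σ ≠ 0)
    (hQ : ContinuousOn Q (Icc (T - n * d) (T - n * d + d)))
    (hQ0 : ∀ x ∈ Icc (T - n * d) (T - n * d + d), 0 < Q x) :
    isSliceSolution n b σ d T Q (sliceRiccati b σ d (T - n * d) Q)
      (fun t _ => b * sliceRiccati b σ d (T - n * d) Q t)
      (fun t _ _ => b ^ 2 * sliceRiccati b σ d (T - n * d) Q t) := by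
  have hint (c : ℝ) {t m : ℝ} (ht : T - (n + 1) * d ≤ t) (htm : t ≤ m) (hm : m ≤ T - n * d) :
      ∫ y in t..m, c * (b ^ 2 * sliceRiccati b σ d (T - n * d) Q y ^ 2 / (σ ^ 2 * Q (y + d))) =
        c * (sliceRiccati b σ d (T - n * d) Q m - sliceRiccati b σ d (T - n * d) Q t) := by
    rw [intervalIntegral.integral_const_mul,
      integral_sliceRiccati hd hσ hQ hQ0 (by linarith) htm hm]
  intro t ht s hs r hr
  refine ⟨?_, ?_, ?_⟩
  · rw [intervalIntegral.integral_congr (g := fun y =>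
      1 * (b ^ 2 * sliceRiccati b σ d (T - n * d) Q y ^ 2 / (σ ^ 2 * Q (y + d))))
      fun y _ => by ring, hint 1 ht.1 ht.2 le_rfl, sliceRiccati_self]
    ring
  · have hm : t ≤ min (T - n * d) (t + s + d) := le_min ht.2 (by linarith [hs.1])
    rw [intervalIntegral.integral_congr (g := fun y =>
      b * (b ^ 2 * sliceRiccati b σ d (T - n * d) Q y ^ 2 / (σ ^ 2 * Q (y + d))))
      fun y _ => by ring, hint b ht.1 hm (min_le_left _ _)]
    ring
  · have hm : t ≤ min (T - n * d) (t + min s r + d) :=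
      le_min ht.2 (by linarith [le_min hs.1 hr.1])
    rw [intervalIntegral.integral_congr (g := fun y =>
      b ^ 2 * (b ^ 2 * sliceRiccati b σ d (T - n * d) Q y ^ 2 / (σ ^ 2 * Q (y + d))))
      fun y _ => by ring, hint (b ^ 2) ht.1 hm (min_le_left _ _)]
    ring

lemma isContTripleSlice_sliceRiccati {n : ℕ} {b σ d T : ℝ} {Q : ℝ → ℝ} (hd : 0 ≤ d)
    (hσ : σ ≠ 0) (hQ : ContinuousOn Q (Icc (T - n * d) (T - n * d + d)))
    (hQ0 : ∀ x ∈ Icc (T - n * d) (T - n * d + d), 0 < Q x) :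
    isContTripleSlice n d T (sliceRiccati b σ d (T - n * d) Q)
      (fun t _ => b * sliceRiccati b σ d (T - n * d) Q t)
      (fun t _ _ => b ^ 2 * sliceRiccati b σ d (T - n * d) Q t) := by
  have h : ContinuousOn (sliceRiccati b σ d (T - n * d) Q) (Icc (T - (n + 1) * d) (T - n * d)) :=
    (continuousOn_riccatiSol (continuous_sliceKernel hd hσ hQ hQ0) (sliceKernel_nonneg hd hQ0)
      (hQ0 _ ⟨le_rfl, by linarith⟩).le).mono fun _ ht => ht.2
  exact ⟨h, continuousOn_const.mul (h.comp continuousOn_fst fun _ hp => hp.1),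
    continuousOn_const.mul (h.comp continuousOn_fst fun _ hp => hp.1)⟩

lemma sliceRiccati_mem_Icc {b σ d t₁ q : ℝ} {Q : ℝ → ℝ} (hd : 0 ≤ d) (hσ : σ ≠ 0)
    (hQ : ContinuousOn Q (Icc t₁ (t₁ + d))) (hq : 0 < q)
    (hQq : ∀ x ∈ Icc t₁ (t₁ + d), q ≤ Q x ∧ Q x ≤ 1) {t : ℝ} (ht₀ : t₁ ≤ t + d) (ht : t ≤ t₁) :
    q - d / q * (b / σ) ^ 2 ≤ sliceRiccati b σ d t₁ Q t ∧ sliceRiccati b σ d t₁ Q t ≤ 1 := by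
  have hQ0 : ∀ x ∈ Icc t₁ (t₁ + d), 0 < Q x := fun x hx => hq.trans_le (hQq x hx).1
  have hk0 := sliceKernel_nonneg (b := b) (σ := σ) hd hQ0
  have hQt₁ := hQq t₁ ⟨le_rfl, by linarith⟩
  have hc : 0 ≤ Q t₁ := hq.le.trans hQt₁.1
  have hK : ∫ y in t..t₁, sliceKernel b σ d t₁ Q y ≤ d * (b / σ) ^ 2 / q :=
    calc ∫ y in t..t₁, sliceKernel b σ d t₁ Q y ≤ ∫ _ in t..t₁, (b / σ) ^ 2 / q :=
          intervalIntegral.integral_mono_on ht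
            ((continuous_sliceKernel hd hσ hQ hQ0).intervalIntegrable _ _)
            intervalIntegrable_const fun y _ => sliceKernel_le hd hq (fun x hx => (hQq x hx).1) y
      _ = (t₁ - t) * ((b / σ) ^ 2 / q) := by simp [mul_div_assoc]
      _ ≤ d * ((b / σ) ^ 2 / q) := by gcongr; linarith
      _ = d * (b / σ) ^ 2 / q := by ring
  refine ⟨?_, (riccatiSol_le hk0 hc ht).trans hQt₁.2⟩
  calc q - d / q * (b / σ) ^ 2 = q - d * (b / σ) ^ 2 / q := by ring
    _ ≤ Q t₁ / (1 + Q t₁ * (d * (b / σ) ^ 2 / q)) :=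
        sub_div_le_div_one_add_mul_div hq hQt₁.1 hQt₁.2 (by positivity)
    _ ≤ sliceRiccati b σ d t₁ Q t := div_one_add_le_riccatiSol hk0 hc ht hK

lemma integral_sub_pow (t t₁ : ℝ) (k : ℕ) :
    ∫ y in t..t₁, (t₁ - y) ^ k = (t₁ - t) ^ (k + 1) / (k + 1) := by
  simp [intervalIntegral.integral_comp_sub_left (fun y => y ^ k), integral_pow]

lemma eqOn_zero_of_le_mul_integral {E : ℝ → ℝ} {L M t₀ t₁ : ℝ} (hL : 0 ≤ L)
    (hE0 : ∀ t ∈ Icc t₀ t₁, 0 ≤ E t) (hEM : ∀ t ∈ Icc t₀ t₁, E t ≤ M)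
    (hint : IntervalIntegrable E volume t₀ t₁)
    (hE : ∀ t ∈ Icc t₀ t₁, E t ≤ L * ∫ y in t..t₁, E y) :
    EqOn E 0 (Icc t₀ t₁) := by
  have hiter : ∀ j : ℕ, ∀ t ∈ Icc t₀ t₁, E t ≤ M * (L * (t₁ - t)) ^ j / j.factorial := by
    intro j
    induction j with
    | zero => simpa using hEM
    | succ j ih =>
      intro t ht
      have hint_t : IntervalIntegrable E volume t t₁ :=
        hint.mono_set <| by
          rw [uIcc_of_le ht.2, uIcc_of_le (ht.1.trans ht.2)]; exact Icc_subset_Icc_left ht.1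
      calc E t ≤ L * ∫ y in t..t₁, E y := hE t ht
        _ ≤ L * ∫ y in t..t₁, M * (L * (t₁ - y)) ^ j / j.factorial := by
          gcongr
          exact intervalIntegral.integral_mono_on ht.2 hint_t
            ((by fun_prop : Continuous _).intervalIntegrable _ _)
            fun y hy => ih y ⟨ht.1.trans hy.1, hy.2⟩
        _ = M * (L * (t₁ - t)) ^ (j + 1) / (j + 1).factorial := by
          simp_rw [mul_pow, intervalIntegral.integral_div, intervalIntegral.integral_const_mul,
            integral_sub_pow, Nat.factorial_succ]
          push_cast
          field_simp
          ring
  intro t ht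
  have hlim : Filter.Tendsto (fun j : ℕ => M * (L * (t₁ - t)) ^ j / j.factorial)
      Filter.atTop (nhds 0) := by
    simpa [mul_div_assoc] using
      (FloorSemiring.tendsto_pow_div_factorial_atTop (L * (t₁ - t))).const_mul M
  exact le_antisymm (ge_of_tendsto hlim (Filter.Eventually.of_forall fun j => hiter j t ht))
    (hE0 t ht)

noncomputable def tailSup {X : Type*} (e : ℝ × X → ℝ) (K : Set X) (t₁ t : ℝ) : ℝ :=
  sSup (e '' (Icc t t₁ ×ˢ K))

section TailSup

variable {X : Type*} {e : ℝ × X → ℝ} {K : Set X} {t₀ t₁ : ℝ}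

lemma bddAbove_image_Icc_prod [TopologicalSpace X] (hK : IsCompact K)
    (he : ContinuousOn e (Icc t₀ t₁ ×ˢ K)) {t : ℝ} (ht : t₀ ≤ t) :
    BddAbove (e '' (Icc t t₁ ×ˢ K)) :=
  (isCompact_Icc.prod hK).bddAbove_image <| he.mono <| prod_mono (Icc_subset_Icc_left ht) le_rfl

lemma le_tailSup [TopologicalSpace X] (hK : IsCompact K)
    (he : ContinuousOn e (Icc t₀ t₁ ×ˢ K)) {t : ℝ} (ht : t₀ ≤ t) {p : ℝ × X}
    (hp : p ∈ Icc t t₁ ×ˢ K) : e p ≤ tailSup e K t₁ t :=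
  le_csSup (bddAbove_image_Icc_prod hK he ht) (mem_image_of_mem e hp)

lemma tailSup_le (hK : K.Nonempty) {t c : ℝ} (ht : t ≤ t₁)
    (h : ∀ p ∈ Icc t t₁ ×ˢ K, e p ≤ c) : tailSup e K t₁ t ≤ c :=
  csSup_le ((nonempty_Icc.2 ht).prod hK |>.image e) (forall_mem_image.2 h)

lemma antitoneOn_tailSup [TopologicalSpace X] (hK : IsCompact K) (hK' : K.Nonempty)
    (he : ContinuousOn e (Icc t₀ t₁ ×ˢ K)) : AntitoneOn (tailSup e K t₁) (Icc t₀ t₁) :=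
  fun _ hu _ hv huv => csSup_le_csSup (bddAbove_image_Icc_prod hK he hu.1)
    (((nonempty_Icc.2 hv.2).prod hK').image e)
    (image_mono (prod_mono (Icc_subset_Icc_left huv) le_rfl))

end TailSup

lemma abs_mul_div_sub_mul_div_le {u v u' v' w M κ ε : ℝ} (hu : |u| ≤ M) (hv' : |v'| ≤ M)
    (huu' : |u - u'| ≤ ε) (hvv' : |v - v'| ≤ ε) (hw : |w⁻¹| ≤ κ) :
    |u * v / w - u' * v' / w| ≤ 2 * M * κ * ε := by
  have hM : 0 ≤ M := (abs_nonneg _).trans hu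
  have hε : 0 ≤ ε := (abs_nonneg _).trans huu'
  have hsplit : u * v / w - u' * v' / w = (u * (v - v') + v' * (u - u')) * w⁻¹ := by ring
  have hnum : |u * (v - v') + v' * (u - u')| ≤ M * ε + M * ε :=
    (abs_add_le _ _).trans <| by rw [abs_mul, abs_mul]; gcongr
  calc |u * v / w - u' * v' / w| ≤ (M * ε + M * ε) * κ := by
        rw [hsplit, abs_mul]; gcongr
    _ = 2 * M * κ * ε := by ring

lemma abs_sub_le_of_eq_sub_integral {X X' V V' c M κ x m t₁ : ℝ} {u v u' v' w E : ℝ → ℝ}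
    (hxm : x ≤ m) (hmt : m ≤ t₁)
    (hX : X = V - ∫ y in x..m, u y * v y / w y) (hX' : X' = V' - ∫ y in x..m, u' y * v' y / w y)
    (hu : ContinuousOn u (Icc x m)) (hv : ContinuousOn v (Icc x m))
    (hu' : ContinuousOn u' (Icc x m)) (hv' : ContinuousOn v' (Icc x m))
    (hw : ContinuousOn w (Icc x m)) (hw0 : ∀ y ∈ Icc x m, w y ≠ 0)
    (hM : ∀ y ∈ Icc x m, |u y| ≤ M ∧ |v' y| ≤ M) (hκ : ∀ y ∈ Icc x m, |(w y)⁻¹| ≤ κ)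
    (hE : ∀ y ∈ Icc x m, |u y - u' y| ≤ E y ∧ |v y - v' y| ≤ E y)
    (hEint : IntervalIntegrable E volume x t₁) (hE0 : ∀ y ∈ Icc x t₁, 0 ≤ E y)
    (hV : |V - V'| ≤ c * ∫ y in x..t₁, E y) :
    |X - X'| ≤ (c + 2 * M * κ) * ∫ y in x..t₁, E y := by
  have hint : ∀ {f g : ℝ → ℝ}, ContinuousOn f (Icc x m) → ContinuousOn g (Icc x m) →
      IntervalIntegrable (fun y => f y * g y / w y) volume x m := fun hf hg =>
    ((hf.mul hg).div hw hw0).intervalIntegrable_of_Icc hxm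
  have hK : 0 ≤ 2 * M * κ := by
    have hx := left_mem_Icc.2 hxm
    have := ((abs_nonneg _).trans (hM x hx).1)
    have := ((abs_nonneg _).trans (hκ x hx))
    positivity
  have hI : ∫ y in x..m, E y ≤ ∫ y in x..t₁, E y :=
    intervalIntegral.integral_mono_interval le_rfl hxm hmt
      ((ae_restrict_mem measurableSet_Ioc).mono fun y hy => hE0 y (Ioc_subset_Icc_self hy)) hEint
  have hdiff : |∫ y in x..m, (u y * v y / w y - u' y * v' y / w y)|
      ≤ ∫ y in x..m, 2 * M * κ * E y := by
    refine intervalIntegral.norm_integral_le_of_norm_le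
      (f := fun y => u y * v y / w y - u' y * v' y / w y) hxm
      (Filter.Eventually.of_forall fun y hy => ?_) ((hEint.mono_set ?_).const_mul _)
    · obtain ⟨hu, hv'⟩ := hM y (Ioc_subset_Icc_self hy)
      obtain ⟨huu', hvv'⟩ := hE y (Ioc_subset_Icc_self hy)
      exact abs_mul_div_sub_mul_div_le hu hv' huu' hvv' (hκ y (Ioc_subset_Icc_self hy))
    · rw [uIcc_of_le hxm, uIcc_of_le (hxm.trans hmt)]
      exact Icc_subset_Icc_right hmt
  rw [intervalIntegral.integral_sub (hint hu hv) (hint hu' hv'),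
    intervalIntegral.integral_const_mul] at hdiff
  calc |X - X'|
        = |(V - V') - ((∫ y in x..m, u y * v y / w y) - ∫ y in x..m, u' y * v' y / w y)| := by
        rw [hX, hX']; ring_nf
    _ ≤ |V - V'| + |(∫ y in x..m, u y * v y / w y) - ∫ y in x..m, u' y * v' y / w y| :=
        abs_sub _ _
    _ ≤ c * (∫ y in x..t₁, E y) + 2 * M * κ * ∫ y in x..t₁, E y := by
        gcongr
        exact hdiff.trans (by gcongr)
    _ = (c + 2 * M * κ) * ∫ y in x..t₁, E y := by ring

def sliceGap (A A' : ℝ → ℝ) (B B' : ℝ → ℝ → ℝ) (C C' : ℝ → ℝ → ℝ → ℝ) (p : ℝ × ℝ × ℝ) : ℝ :=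
  max |A p.1 - A' p.1| (max |B p.1 p.2.1 - B' p.1 p.2.1| |C p.1 p.2.1 p.2.2 - C' p.1 p.2.1 p.2.2|)

lemma sliceGap_le_iff {A A' : ℝ → ℝ} {B B' : ℝ → ℝ → ℝ} {C C' : ℝ → ℝ → ℝ → ℝ} {t s r c : ℝ} :
    sliceGap A A' B B' C C' (t, s, r) ≤ c ↔
      |A t - A' t| ≤ c ∧ |B t s - B' t s| ≤ c ∧ |C t s r - C' t s r| ≤ c := by
  simp only [sliceGap, max_le_iff]

namespace isContTripleSlice

variable {n : ℕ} {d T : ℝ} {A : ℝ → ℝ} {B : ℝ → ℝ → ℝ} {C : ℝ → ℝ → ℝ → ℝ}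

lemma continuousOn_P12_zero (h : isContTripleSlice n d T A B C) (hd : 0 ≤ d) :
    ContinuousOn (fun y => B y 0) (Icc (T - (n + 1) * d) (T - n * d)) :=
  h.2.1.comp (by fun_prop : Continuous fun y : ℝ => (y, (0 : ℝ))).continuousOn
    fun _ hy => ⟨hy, neg_nonpos.2 hd, le_rfl⟩

lemma continuousOn_P22_left (h : isContTripleSlice n d T A B C) (hd : 0 ≤ d) (c : ℝ) :
    ContinuousOn (fun y => C y (c - y) 0) (Icc (T - (n + 1) * d) (T - n * d) ∩ Icc c (c + d)) :=
  h.2.2.comp (by fun_prop : Continuous fun y : ℝ => (y, c - y, (0 : ℝ))).continuousOn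
    fun _ hy => ⟨hy.1, ⟨by linarith [hy.2.2], by linarith [hy.2.1]⟩, neg_nonpos.2 hd, le_rfl⟩

lemma continuousOn_P22_right (h : isContTripleSlice n d T A B C) (hd : 0 ≤ d) (c : ℝ) :
    ContinuousOn (fun y => C y 0 (c - y)) (Icc (T - (n + 1) * d) (T - n * d) ∩ Icc c (c + d)) :=
  h.2.2.comp (by fun_prop : Continuous fun y : ℝ => (y, (0 : ℝ), c - y)).continuousOn
    fun _ hy => ⟨hy.1, ⟨neg_nonpos.2 hd, le_rfl⟩, by linarith [hy.2.2], by linarith [hy.2.1]⟩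

lemma exists_abs_le (h : isContTripleSlice n d T A B C) :
    ∃ M, ∀ y ∈ Icc (T - (n + 1) * d) (T - n * d), ∀ u ∈ Icc (-d) 0, ∀ v ∈ Icc (-d) 0,
      |B y u| ≤ M ∧ |C y u v| ≤ M := by
  obtain ⟨M₁, hM₁⟩ := (isCompact_Icc.prod isCompact_Icc).exists_bound_of_continuousOn h.2.1
  obtain ⟨M₂, hM₂⟩ :=
    (isCompact_Icc.prod (isCompact_Icc.prod isCompact_Icc)).exists_bound_of_continuousOn h.2.2
  exact ⟨max M₁ M₂, fun y hy u hu v hv => ⟨(hM₁ (y, u) ⟨hy, hu⟩).trans (le_max_left _ _),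
    (hM₂ (y, u, v) ⟨hy, hu, hv⟩).trans (le_max_right _ _)⟩⟩

lemma continuousOn_sliceGap {A' : ℝ → ℝ} {B' : ℝ → ℝ → ℝ} {C' : ℝ → ℝ → ℝ → ℝ}
    (hc : isContTripleSlice n d T A B C) (hc' : isContTripleSlice n d T A' B' C') :
    ContinuousOn (sliceGap A A' B B' C C')
      (Icc (T - (n + 1) * d) (T - n * d) ×ˢ Icc (-d) 0 ×ˢ Icc (-d) 0) := by
  have hfst : ∀ {A : ℝ → ℝ}, ContinuousOn A (Icc (T - (n + 1) * d) (T - n * d)) →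
      ContinuousOn (fun p : ℝ × ℝ × ℝ => A p.1)
        (Icc (T - (n + 1) * d) (T - n * d) ×ˢ Icc (-d) 0 ×ˢ Icc (-d) 0) :=
    fun h => h.comp continuousOn_fst fun _ hp => hp.1
  have hsnd : ∀ {B : ℝ → ℝ → ℝ}, ContinuousOn (fun p : ℝ × ℝ => B p.1 p.2)
      (Icc (T - (n + 1) * d) (T - n * d) ×ˢ Icc (-d) 0) →
      ContinuousOn (fun p : ℝ × ℝ × ℝ => B p.1 p.2.1)
        (Icc (T - (n + 1) * d) (T - n * d) ×ˢ Icc (-d) 0 ×ˢ Icc (-d) 0) :=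
    fun h => h.comp (by fun_prop : Continuous fun p : ℝ × ℝ × ℝ => (p.1, p.2.1)).continuousOn
      fun _ hp => ⟨hp.1, hp.2.1⟩
  exact ((hfst hc.1).sub (hfst hc'.1)).abs.sup
    (((hsnd hc.2.1).sub (hsnd hc'.2.1)).abs.sup (hc.2.2.sub hc'.2.2).abs)

end isContTripleSlice

section SliceComparison

variable {n : ℕ} {b σ d T : ℝ} {Q : ℝ → ℝ} {A A' : ℝ → ℝ} {B B' : ℝ → ℝ → ℝ}
  {C C' : ℝ → ℝ → ℝ → ℝ} {E : ℝ → ℝ} {M κ : ℝ}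
  (hsol : isSliceSolution n b σ d T Q A B C) (hsol' : isSliceSolution n b σ d T Q A' B' C')
  (hc : isContTripleSlice n d T A B C) (hc' : isContTripleSlice n d T A' B' C') (hd : 0 ≤ d)
  (hw : ContinuousOn (fun y => σ ^ 2 * Q (y + d)) (Icc (T - (n + 1) * d) (T - n * d)))
  (hw0 : ∀ y ∈ Icc (T - (n + 1) * d) (T - n * d), σ ^ 2 * Q (y + d) ≠ 0)
  (hκ : ∀ y ∈ Icc (T - (n + 1) * d) (T - n * d), |(σ ^ 2 * Q (y + d))⁻¹| ≤ κ)
  (hM : ∀ y ∈ Icc (T - (n + 1) * d) (T - n * d), ∀ u ∈ Icc (-d) 0, ∀ v ∈ Icc (-d) 0,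
    |B y u| ≤ M ∧ |C y u v| ≤ M ∧ |B' y u| ≤ M ∧ |C' y u v| ≤ M)
  (hE : ∀ y ∈ Icc (T - (n + 1) * d) (T - n * d), ∀ u ∈ Icc (-d) 0, ∀ v ∈ Icc (-d) 0,
    sliceGap A A' B B' C C' (y, u, v) ≤ E y)
  (hEint : IntervalIntegrable E volume (T - (n + 1) * d) (T - n * d))

include hd hE in
lemma nonneg_of_sliceGap_le {y : ℝ} (hy : y ∈ Icc (T - (n + 1) * d) (T - n * d)) : 0 ≤ E y :=
  have h0 : (0 : ℝ) ∈ Icc (-d) 0 := ⟨neg_nonpos.2 hd, le_rfl⟩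
  (abs_nonneg _).trans (sliceGap_le_iff.1 (hE y hy 0 h0 0 h0)).1

include hEint in
lemma intervalIntegrable_tail {x : ℝ} (hx : x ∈ Icc (T - (n + 1) * d) (T - n * d)) :
    IntervalIntegrable E volume x (T - n * d) :=
  hEint.mono_set <| by
    rw [uIcc_of_le hx.2, uIcc_of_le (hx.1.trans hx.2)]
    exact Icc_subset_Icc_left hx.1

include hd hE hEint in
lemma integral_tail_mono {x m : ℝ} (hx : x ∈ Icc (T - (n + 1) * d) (T - n * d)) (hxm : x ≤ m)
    (hm : m ≤ T - n * d) : ∫ y in m..T - n * d, E y ≤ ∫ y in x..T - n * d, E y :=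
  intervalIntegral.integral_mono_interval hxm hm le_rfl
    ((ae_restrict_mem measurableSet_Ioc).mono fun _ hy =>
      nonneg_of_sliceGap_le hd hE ⟨hx.1.trans hy.1.le, hy.2⟩)
    (intervalIntegrable_tail hEint hx)

include hd hκ hM in
lemma two_mul_mul_nonneg : 0 ≤ 2 * M * κ := by
  have ht₀ : T - (n + 1) * d ∈ Icc (T - (n + 1) * d) (T - n * d) := ⟨le_rfl, by linarith⟩
  have h0 : (0 : ℝ) ∈ Icc (-d) 0 := ⟨neg_nonpos.2 hd, le_rfl⟩
  have := (abs_nonneg _).trans (hM _ ht₀ 0 h0 0 h0).1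
  have := (abs_nonneg _).trans (hκ _ ht₀)
  positivity

include hsol hsol' hc hc' hd hw hw0 hκ hM hE hEint in
lemma abs_P11_sub_le {x : ℝ} (hx : x ∈ Icc (T - (n + 1) * d) (T - n * d)) :
    |A x - A' x| ≤ 2 * M * κ * ∫ y in x..T - n * d, E y := by
  have h0 : (0 : ℝ) ∈ Icc (-d) 0 := ⟨neg_nonpos.2 hd, le_rfl⟩
  have hsub : Icc x (T - n * d) ⊆ Icc (T - (n + 1) * d) (T - n * d) := Icc_subset_Icc_left hx.1
  have e : A x = Q (T - n * d) - ∫ y in x..T - n * d, B y 0 * B y 0 / (σ ^ 2 * Q (y + d)) := by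
    simpa only [← sq] using (hsol x hx 0 h0 0 h0).1
  have e' : A' x = Q (T - n * d) - ∫ y in x..T - n * d, B' y 0 * B' y 0 / (σ ^ 2 * Q (y + d)) := by
    simpa only [← sq] using (hsol' x hx 0 h0 0 h0).1
  simpa using abs_sub_le_of_eq_sub_integral (c := 0) hx.2 le_rfl e e'
    ((hc.continuousOn_P12_zero hd).mono hsub) ((hc.continuousOn_P12_zero hd).mono hsub)
    ((hc'.continuousOn_P12_zero hd).mono hsub) ((hc'.continuousOn_P12_zero hd).mono hsub)
    (hw.mono hsub) (fun y hy => hw0 y (hsub hy))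
    (fun y hy => ⟨(hM y (hsub hy) 0 h0 0 h0).1, (hM y (hsub hy) 0 h0 0 h0).2.2.1⟩)
    (fun y hy => hκ y (hsub hy))
    (fun y hy => have hg := sliceGap_le_iff.1 (hE y (hsub hy) 0 h0 0 h0); ⟨hg.2.1, hg.2.1⟩)
    (intervalIntegrable_tail hEint hx) (fun y hy => nonneg_of_sliceGap_le hd hE (hsub hy))
    (by simp)

include hsol hsol' hc hc' hd hw hw0 hκ hM hE hEint in
lemma abs_P12_sub_le {x s : ℝ} (hx : x ∈ Icc (T - (n + 1) * d) (T - n * d))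
    (hs : s ∈ Icc (-d) 0) :
    |B x s - B' x s| ≤ (|b| * (2 * M * κ) + 2 * M * κ) * ∫ y in x..T - n * d, E y := by
  have h0 : (0 : ℝ) ∈ Icc (-d) 0 := ⟨neg_nonpos.2 hd, le_rfl⟩
  set m := min (T - n * d) (x + s + d)
  have hxm : x ≤ m := le_min hx.2 (by linarith [hs.1])
  have hmt : m ≤ T - n * d := min_le_left _ _
  have hsub : Icc x m ⊆ Icc (T - (n + 1) * d) (T - n * d) ∩ Icc (x + s) (x + s + d) :=
    fun y hy => ⟨⟨hx.1.trans hy.1, hy.2.trans hmt⟩, by linarith [hs.2, hy.1],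
      hy.2.trans (min_le_right _ _)⟩
  have hu : ∀ y ∈ Icc x m, x + s - y ∈ Icc (-d) 0 := fun y hy =>
    ⟨by linarith [(hsub hy).2.2], by linarith [(hsub hy).2.1]⟩
  have hV : |b * A m - b * A' m| ≤ |b| * (2 * M * κ) * ∫ y in x..T - n * d, E y := by
    rw [← mul_sub, abs_mul, mul_assoc]
    gcongr
    refine (abs_P11_sub_le hsol hsol' hc hc' hd hw hw0 hκ hM hE hEint
      ⟨hx.1.trans hxm, hmt⟩).trans ?_
    gcongr
    · exact two_mul_mul_nonneg hd hκ hM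
    · exact integral_tail_mono hd hE hEint hx hxm hmt
  exact abs_sub_le_of_eq_sub_integral hxm hmt (hsol x hx s hs 0 h0).2.1 (hsol' x hx s hs 0 h0).2.1
    ((hc.continuousOn_P12_zero hd).mono fun y hy => (hsub hy).1)
    ((hc.continuousOn_P22_left hd _).mono hsub)
    ((hc'.continuousOn_P12_zero hd).mono fun y hy => (hsub hy).1)
    ((hc'.continuousOn_P22_left hd _).mono hsub)
    (hw.mono fun y hy => (hsub hy).1) (fun y hy => hw0 y (hsub hy).1)
    (fun y hy => ⟨(hM y (hsub hy).1 0 h0 0 h0).1, (hM y (hsub hy).1 _ (hu y hy) 0 h0).2.2.2⟩)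
    (fun y hy => hκ y (hsub hy).1)
    (fun y hy => ⟨(sliceGap_le_iff.1 (hE y (hsub hy).1 0 h0 0 h0)).2.1,
      (sliceGap_le_iff.1 (hE y (hsub hy).1 _ (hu y hy) 0 h0)).2.2⟩)
    (intervalIntegrable_tail hEint hx)
    (fun y hy => nonneg_of_sliceGap_le hd hE ⟨hx.1.trans hy.1, hy.2⟩) hV

include hsol hsol' hc hc' hd hw hw0 hκ hM hE hEint in
lemma abs_P22_sub_le {x s r : ℝ} (hx : x ∈ Icc (T - (n + 1) * d) (T - n * d))
    (hs : s ∈ Icc (-d) 0) (hr : r ∈ Icc (-d) 0) :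
    |C x s r - C' x s r| ≤
      (|b| * (|b| * (2 * M * κ) + 2 * M * κ) + 2 * M * κ) * ∫ y in x..T - n * d, E y := by
  have h0 : (0 : ℝ) ∈ Icc (-d) 0 := ⟨neg_nonpos.2 hd, le_rfl⟩
  set m := min (T - n * d) (x + min s r + d)
  have hxm : x ≤ m := le_min hx.2 (by linarith [le_min hs.1 hr.1])
  have hmt : m ≤ T - n * d := min_le_left _ _
  have hmsr : m ≤ x + min s r + d := min_le_right _ _
  have hsub : ∀ c ∈ Icc (min s r) 0, Icc x m ⊆
      Icc (T - (n + 1) * d) (T - n * d) ∩ Icc (x + c) (x + c + d) := fun c hc y hy =>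
    ⟨⟨hx.1.trans hy.1, hy.2.trans hmt⟩, by linarith [hc.2, hy.1], by linarith [hc.1, hy.2]⟩
  have hs' : s ∈ Icc (min s r) 0 := ⟨min_le_left _ _, hs.2⟩
  have hr' : r ∈ Icc (min s r) 0 := ⟨min_le_right _ _, hr.2⟩
  have hu : ∀ c ∈ Icc (min s r) 0, ∀ y ∈ Icc x m, x + c - y ∈ Icc (-d) 0 := fun c hc y hy =>
    ⟨by linarith [(hsub c hc hy).2.2], by linarith [(hsub c hc hy).2.1]⟩
  have hsr : |s - r| - d ∈ Icc (-d) 0 := by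
    have : |s - r| ≤ d := abs_le.2 ⟨by linarith [hs.1, hr.2], by linarith [hs.2, hr.1]⟩
    exact ⟨by linarith [abs_nonneg (s - r)], by linarith⟩
  have hV : |b * B m (|s - r| - d) - b * B' m (|s - r| - d)| ≤
      |b| * (|b| * (2 * M * κ) + 2 * M * κ) * ∫ y in x..T - n * d, E y := by
    rw [← mul_sub, abs_mul, mul_assoc]
    gcongr
    refine (abs_P12_sub_le hsol hsol' hc hc' hd hw hw0 hκ hM hE hEint
      ⟨hx.1.trans hxm, hmt⟩ hsr).trans ?_
    have := two_mul_mul_nonneg hd hκ hM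
    gcongr
    exact integral_tail_mono hd hE hEint hx hxm hmt
  have hI := (hsub s hs').trans inter_subset_left
  exact abs_sub_le_of_eq_sub_integral hxm hmt (hsol x hx s hs r hr).2.2 (hsol' x hx s hs r hr).2.2
    ((hc.continuousOn_P22_left hd _).mono (hsub s hs'))
    ((hc.continuousOn_P22_right hd _).mono (hsub r hr'))
    ((hc'.continuousOn_P22_left hd _).mono (hsub s hs'))
    ((hc'.continuousOn_P22_right hd _).mono (hsub r hr'))
    (hw.mono hI) (fun y hy => hw0 y (hI hy))
    (fun y hy => ⟨(hM y (hI hy) _ (hu s hs' y hy) 0 h0).2.1,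
      (hM y (hI hy) 0 h0 _ (hu r hr' y hy)).2.2.2⟩)
    (fun y hy => hκ y (hI hy))
    (fun y hy => ⟨(sliceGap_le_iff.1 (hE y (hI hy) _ (hu s hs' y hy) 0 h0)).2.2,
      (sliceGap_le_iff.1 (hE y (hI hy) 0 h0 _ (hu r hr' y hy))).2.2⟩)
    (intervalIntegrable_tail hEint hx)
    (fun y hy => nonneg_of_sliceGap_le hd hE ⟨hx.1.trans hy.1, hy.2⟩) hV

include hsol hsol' hc hc' hd hw hw0 hκ hM hE hEint in
lemma sliceGap_le_mul_integral {x s r : ℝ} (hx : x ∈ Icc (T - (n + 1) * d) (T - n * d))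
    (hs : s ∈ Icc (-d) 0) (hr : r ∈ Icc (-d) 0) :
    sliceGap A A' B B' C C' (x, s, r) ≤
      (|b| * (|b| * (2 * M * κ) + 2 * M * κ) + 2 * M * κ) * ∫ y in x..T - n * d, E y := by
  have hK := two_mul_mul_nonneg hd hκ hM
  have hI : 0 ≤ ∫ y in x..T - n * d, E y := intervalIntegral.integral_nonneg hx.2
    fun y hy => nonneg_of_sliceGap_le hd hE ⟨hx.1.trans hy.1, hy.2⟩
  refine sliceGap_le_iff.2
    ⟨?_, ?_, abs_P22_sub_le hsol hsol' hc hc' hd hw hw0 hκ hM hE hEint hx hs hr⟩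
  · refine (abs_P11_sub_le hsol hsol' hc hc' hd hw hw0 hκ hM hE hEint hx).trans ?_
    gcongr
    exact le_add_of_nonneg_left (by positivity)
  · refine (abs_P12_sub_le hsol hsol' hc hc' hd hw hw0 hκ hM hE hEint hx hs).trans ?_
    gcongr
    exact le_add_of_nonneg_left (by positivity)

include hsol hsol' hc hc' hd hw hw0 hκ hM in
lemma sliceGap_nonpos {x s r : ℝ} (hx : x ∈ Icc (T - (n + 1) * d) (T - n * d))
    (hs : s ∈ Icc (-d) 0) (hr : r ∈ Icc (-d) 0) : sliceGap A A' B B' C C' (x, s, r) ≤ 0 := by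
  have hI : T - (n + 1) * d ≤ T - n * d := by linarith
  have hJ : IsCompact (Icc (-d) 0 ×ˢ Icc (-d) 0) := isCompact_Icc.prod isCompact_Icc
  have hJne : (Icc (-d) 0 ×ˢ Icc (-d) 0).Nonempty :=
    ⟨(0, 0), ⟨neg_nonpos.2 hd, le_rfl⟩, neg_nonpos.2 hd, le_rfl⟩
  have hg := hc.continuousOn_sliceGap hc'
  set E := tailSup (sliceGap A A' B B' C C') (Icc (-d) 0 ×ˢ Icc (-d) 0) (T - n * d)
  have hE : ∀ y ∈ Icc (T - (n + 1) * d) (T - n * d), ∀ u ∈ Icc (-d) 0, ∀ v ∈ Icc (-d) 0,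
      sliceGap A A' B B' C C' (y, u, v) ≤ E y :=
    fun y hy u hu v hv => le_tailSup hJ hg hy.1 ⟨⟨le_rfl, hy.2⟩, hu, hv⟩
  have hanti := antitoneOn_tailSup hJ hJne hg
  have hEint : IntervalIntegrable E volume (T - (n + 1) * d) (T - n * d) :=
    (hanti.mono (uIcc_subset_Icc (left_mem_Icc.2 hI) (right_mem_Icc.2 hI))).intervalIntegrable
  have hL : 0 ≤ |b| * (|b| * (2 * M * κ) + 2 * M * κ) + 2 * M * κ := by
    have := two_mul_mul_nonneg hd hκ hM
    positivity
  have hGronwall : ∀ t ∈ Icc (T - (n + 1) * d) (T - n * d),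
      E t ≤ (|b| * (|b| * (2 * M * κ) + 2 * M * κ) + 2 * M * κ) * ∫ y in t..T - n * d, E y :=
    fun t ht => tailSup_le hJne ht.2 fun p hp => by
      refine (sliceGap_le_mul_integral hsol hsol' hc hc' hd hw hw0 hκ hM hE hEint
        ⟨ht.1.trans hp.1.1, hp.1.2⟩ hp.2.1 hp.2.2).trans ?_
      gcongr
      exact integral_tail_mono hd hE hEint ht hp.1.1 hp.1.2
  have hzero := eqOn_zero_of_le_mul_integral hL (fun t ht => nonneg_of_sliceGap_le hd hE ht)
    (fun t ht => hanti ⟨le_rfl, hI⟩ ht ht.1) hEint hGronwall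
  exact (hE x hx s hs r hr).trans (hzero hx).le

end SliceComparison

theorem isSliceSolution_unique {n : ℕ} {b σ d T : ℝ} {Q : ℝ → ℝ} {A A' : ℝ → ℝ}
    {B B' : ℝ → ℝ → ℝ} {C C' : ℝ → ℝ → ℝ → ℝ} (hd : 0 ≤ d) (hσ : σ ≠ 0)
    (hQ : ContinuousOn Q (Icc (T - n * d) (T - n * d + d)))
    (hQ0 : ∀ x ∈ Icc (T - n * d) (T - n * d + d), Q x ≠ 0)
    (hc : isContTripleSlice n d T A B C) (hsol : isSliceSolution n b σ d T Q A B C)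
    (hc' : isContTripleSlice n d T A' B' C') (hsol' : isSliceSolution n b σ d T Q A' B' C') :
    (∀ t ∈ Icc (T - (n + 1) * d) (T - n * d), A t = A' t) ∧
      (∀ t ∈ Icc (T - (n + 1) * d) (T - n * d), ∀ s ∈ Icc (-d) 0, B t s = B' t s) ∧
      (∀ t ∈ Icc (T - (n + 1) * d) (T - n * d), ∀ s ∈ Icc (-d) 0, ∀ r ∈ Icc (-d) 0,
        C t s r = C' t s r) := by
  have hshift : MapsTo (· + d) (Icc (T - (n + 1) * d) (T - n * d))
      (Icc (T - n * d) (T - n * d + d)) := fun y hy => ⟨by linarith [hy.1], by linarith [hy.2]⟩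
  have hw : ContinuousOn (fun y => σ ^ 2 * Q (y + d)) (Icc (T - (n + 1) * d) (T - n * d)) :=
    continuousOn_const.mul (hQ.comp (by fun_prop) hshift)
  have hw0 : ∀ y ∈ Icc (T - (n + 1) * d) (T - n * d), σ ^ 2 * Q (y + d) ≠ 0 :=
    fun y hy => mul_ne_zero (pow_ne_zero 2 hσ) (hQ0 _ (hshift hy))
  obtain ⟨κ, hκ⟩ := isCompact_Icc.exists_bound_of_continuousOn (hw.inv₀ hw0)
  obtain ⟨M, hM⟩ := hc.exists_abs_le
  obtain ⟨M', hM'⟩ := hc'.exists_abs_le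
  have hMM : ∀ y ∈ Icc (T - (n + 1) * d) (T - n * d), ∀ u ∈ Icc (-d) 0, ∀ v ∈ Icc (-d) 0,
      |B y u| ≤ max M M' ∧ |C y u v| ≤ max M M' ∧ |B' y u| ≤ max M M' ∧ |C' y u v| ≤ max M M' :=
    fun y hy u hu v hv => ⟨(hM y hy u hu v hv).1.trans (le_max_left _ _),
      (hM y hy u hu v hv).2.trans (le_max_left _ _),
      (hM' y hy u hu v hv).1.trans (le_max_right _ _),
      (hM' y hy u hu v hv).2.trans (le_max_right _ _)⟩
  have hgap {t s r} (ht : t ∈ Icc (T - (n + 1) * d) (T - n * d)) (hs : s ∈ Icc (-d) 0)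
      (hr : r ∈ Icc (-d) 0) :=
    sliceGap_le_iff.1 <|
      sliceGap_nonpos hsol hsol' hc hc' hd hw hw0 (fun y hy => hκ y hy) hMM ht hs hr
  have h0 : (0 : ℝ) ∈ Icc (-d) 0 := ⟨neg_nonpos.2 hd, le_rfl⟩
  refine ⟨fun t ht => ?_, fun t ht s hs => ?_, fun t ht s hs r hr => ?_⟩
  · exact sub_eq_zero.1 (abs_nonpos_iff.1 (hgap ht h0 h0).1)
  · exact sub_eq_zero.1 (abs_nonpos_iff.1 (hgap ht hs h0).2.1)
  · exact sub_eq_zero.1 (abs_nonpos_iff.1 (hgap ht hs hr).2.2)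

theorem stmt_10_general (n : ℕ) (hn : 1 ≤ n) (d b σ T : ℝ) (hd : 0 < d) (hσ : σ ≠ 0)
    (a : ℕ → ℝ)
    (harec : ∀ k : ℕ, a (k + 1) = a k - (d / a k) * (b / σ) ^ 2)
    (hapos : ∀ k : ℕ, 1 ≤ k → k ≤ n + 1 → 0 < a k)
    (Q : ℝ → ℝ)
    (hQcont : ContinuousOn Q (Icc (T - (n : ℝ) * d) (T - (n : ℝ) * d + d)))
    (hQ : ∀ x ∈ Icc (T - (n : ℝ) * d) (T - (n : ℝ) * d + d), a n ≤ Q x ∧ Q x ≤ 1) :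
    ∃ (P11 : ℝ → ℝ) (P12 : ℝ → ℝ → ℝ) (P22 : ℝ → ℝ → ℝ → ℝ),
      isContTripleSlice n d T P11 P12 P22 ∧ isSliceSolution n b σ d T Q P11 P12 P22 ∧
      (∀ t ∈ Icc (T - ((n : ℝ) + 1) * d) (T - (n : ℝ) * d),
        a (n + 1) ≤ P11 t ∧ P11 t ≤ 1) ∧
      ∀ (P11' : ℝ → ℝ) (P12' : ℝ → ℝ → ℝ) (P22' : ℝ → ℝ → ℝ → ℝ),
        isContTripleSlice n d T P11' P12' P22' →
        isSliceSolution n b σ d T Q P11' P12' P22' →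
          (∀ t ∈ Icc (T - ((n : ℝ) + 1) * d) (T - (n : ℝ) * d), P11' t = P11 t) ∧
          (∀ t ∈ Icc (T - ((n : ℝ) + 1) * d) (T - (n : ℝ) * d), ∀ s ∈ Icc (-d) 0,
            P12' t s = P12 t s) ∧
          (∀ t ∈ Icc (T - ((n : ℝ) + 1) * d) (T - (n : ℝ) * d), ∀ s ∈ Icc (-d) 0,
            ∀ r ∈ Icc (-d) 0, P22' t s r = P22 t s r) := by
  have han : 0 < a n := hapos n hn n.le_succ
  have hQpos : ∀ x ∈ Icc (T - (n : ℝ) * d) (T - (n : ℝ) * d + d), 0 < Q x :=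
    fun x hx => han.trans_le (hQ x hx).1
  have hcont := isContTripleSlice_sliceRiccati (b := b) hd.le hσ hQcont hQpos
  have hsol := isSliceSolution_sliceRiccati (b := b) hd.le hσ hQcont hQpos
  refine ⟨_, _, _, hcont, hsol, fun t ht => ?_, fun P11' P12' P22' hcont' hsol' =>
    isSliceSolution_unique hd.le hσ hQcont (fun x hx => (hQpos x hx).ne') hcont' hsol' hcont hsol⟩
  rw [harec n]
  exact sliceRiccati_mem_Icc hd.le hσ hQcont han hQ (by linarith [ht.1]) ht.2

/-- If `a₁, …, a_{n+1}` are positive and `Q` is a continuous coefficient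
on the previous slice with `aₙ ≤ Q ≤ 1`, then the `n`-th slice integral system has a
unique continuous solution, whose first component satisfies `a_{n+1} ≤ P₁₁ ≤ 1`. -/
theorem stmt_10 (n : ℕ) (hn : 1 ≤ n) (d b σ T : ℝ) (hd : 0 < d) (hσ : σ ≠ 0)
    (hT : ((n : ℝ) + 1) * d ≤ T)
    (a : ℕ → ℝ) (ha0 : a 0 = 1)
    (harec : ∀ k : ℕ, a (k + 1) = a k - (d / a k) * (b / σ) ^ 2)
    (hapos : ∀ k : ℕ, 1 ≤ k → k ≤ n + 1 → 0 < a k)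
    (Q : ℝ → ℝ)
    (hQcont : ContinuousOn Q (Icc (T - (n : ℝ) * d) (T - (n : ℝ) * d + d)))
    (hQ : ∀ x ∈ Icc (T - (n : ℝ) * d) (T - (n : ℝ) * d + d), a n ≤ Q x ∧ Q x ≤ 1) :
    ∃ (P11 : ℝ → ℝ) (P12 : ℝ → ℝ → ℝ) (P22 : ℝ → ℝ → ℝ → ℝ),
      isContTripleSlice n d T P11 P12 P22 ∧ isSliceSolution n b σ d T Q P11 P12 P22 ∧
      (∀ t ∈ Icc (T - ((n : ℝ) + 1) * d) (T - (n : ℝ) * d),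
        a (n + 1) ≤ P11 t ∧ P11 t ≤ 1) ∧
      ∀ (P11' : ℝ → ℝ) (P12' : ℝ → ℝ → ℝ) (P22' : ℝ → ℝ → ℝ → ℝ),
        isContTripleSlice n d T P11' P12' P22' →
        isSliceSolution n b σ d T Q P11' P12' P22' →
          (∀ t ∈ Icc (T - ((n : ℝ) + 1) * d) (T - (n : ℝ) * d), P11' t = P11 t) ∧
          (∀ t ∈ Icc (T - ((n : ℝ) + 1) * d) (T - (n : ℝ) * d), ∀ s ∈ Icc (-d) 0,
            P12' t s = P12 t s) ∧
          (∀ t ∈ Icc (T - ((n : ℝ) + 1) * d) (T - (n : ℝ) * d), ∀ s ∈ Icc (-d) 0,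
            ∀ r ∈ Icc (-d) 0, P22' t s r = P22 t s r) :=
  stmt_10_general n hn d b σ T hd hσ a harec hapos Q hQcont hQ
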